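/- The Prabhakar fractional integral satisfies the semigroup-type composition on kernels: for α > 0, β > 0, μ > 0, real λ, γ, σ, and t > t₀, ∫_{t₀}^t (t-u)^{β-1} E_{α,β}^γ(λ(t-u)^α) · (u-t₀)^{μ-1} E_{α,μ}^σ(λ(u-t₀)^α) du = (t-t₀)^{β+μ-1} E_{α,β+μ}^{γ+σ}(λ(t-t₀)^α). -/

import Mathlib

/-!
Expanding `w ^ (β - 1) * E_{α,β}^γ(λ w ^ α) = ∑ₖ (γ)ₖ / k! · λ ^ k / Γ(αk + β) · w ^ (αk + β - 1)`,
the convolution of two kernels is integrated term by term. Each pair of monomials gives a beta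
integral `B(αi + β, αj + μ) (t - t₀) ^ (α(i + j) + β + μ - 1)`, whose Gamma factors cancel those of
the coefficients, leaving `λ ^ (i + j) / Γ(α(i + j) + β + μ)`. Grouping the pairs with `i + j = n`,
the Chu–Vandermonde identity `∑ (γ)ᵢ (σ)ⱼ / (i! j!) = (γ + σ)ₙ / n!` produces exactly the
coefficients of the kernel with parameters `β + μ` and `γ + σ`. Term-by-term integration is
legitimate because the beta function is antitone in both arguments, so the double series of
absolute values is dominated by the product of the two kernel series at `t - t₀`.
-/

open scoped BigOperators

/-- Pochhammer symbol `(γ)_k = γ(γ+1)⋯(γ+k-1)`. -/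
noncomputable def poch (γ : ℝ) (k : ℕ) : ℝ := ∏ i ∈ Finset.range k, (γ + i)

/-- The real-argument Prabhakar function `E_{α,β}^γ(x)`. -/
noncomputable def prabhakarR (α β γ : ℝ) (x : ℝ) : ℝ :=
  ∑' k : ℕ, poch γ k * x ^ k / (Nat.factorial k * Real.Gamma (α * k + β))

open Real

section Pochhammer

open Finset

theorem Ring.multichoose_add {R : Type*} [CommRing R] [BinomialRing R] (r s : R) (n : ℕ) :
    Ring.multichoose (r + s) n =
      ∑ ij ∈ antidiagonal n, Ring.multichoose r ij.1 * Ring.multichoose s ij.2 := by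
  have h := Ring.add_choose_eq n (Commute.all (-r) (-s))
  rw [← neg_add, Ring.choose_neg'] at h
  rw [← smul_left_cancel_iff (Int.negOnePow n), h, smul_sum]
  refine sum_congr rfl fun ij hij => ?_
  rw [HasAntidiagonal.mem_antidiagonal] at hij
  rw [Ring.choose_neg', Ring.choose_neg', smul_mul_smul_comm, ← Int.negOnePow_add, ← hij,
    Nat.cast_add]

theorem poch_eq_factorial_mul_multichoose (γ : ℝ) (k : ℕ) :
    poch γ k = k.factorial * Ring.multichoose γ k := by
  rw [← nsmul_eq_mul, Ring.factorial_nsmul_multichoose_eq_ascPochhammer,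
    Polynomial.ascPochhammer_smeval_eq_eval, poch]
  induction k with
  | zero => simp
  | succ k ih => rw [prod_range_succ, ih, ascPochhammer_succ_eval]

theorem abs_poch_le (γ : ℝ) (k : ℕ) : |poch γ k| ≤ k.factorial * (1 + |γ|) ^ k := by
  induction k with
  | zero => simp [poch]
  | succ k ih =>
    have hstep : |γ + k| ≤ (k + 1) * (1 + |γ|) := by
      have := abs_add_le γ k
      rw [Nat.abs_cast] at this
      nlinarith [abs_nonneg γ, (Nat.cast_nonneg k : (0 : ℝ) ≤ k)]
    rw [poch, prod_range_succ, ← poch, abs_mul, Nat.factorial_succ, pow_succ]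
    push_cast
    calc |poch γ k| * |γ + k| ≤ (k.factorial * (1 + |γ|) ^ k) * ((k + 1) * (1 + |γ|)) := by
          gcongr
      _ = _ := by ring

end Pochhammer

open Finset in
theorem tsum_prod_eq_tsum_sum_antidiagonal {A M : Type*} [AddCommMonoid A] [HasAntidiagonal A]
    [AddCommMonoid M] [TopologicalSpace M] [ContinuousAdd M] [T3Space M] {f : A × A → M}
    (hf : Summable f) : ∑' p, f p = ∑' n, ∑ p ∈ antidiagonal n, f p := by
  rw [← HasAntidiagonal.sigmaAntidiagonalEquivProd.tsum_eq f]
  exact ((HasAntidiagonal.sigmaAntidiagonalEquivProd.summable_iff.mpr hf).tsum_sigma'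
    fun n => (hasSum_fintype _).summable).trans
      (tsum_congr fun n => tsum_subtype (antidiagonal n) f)

section GammaGrowth

open Filter

theorem Real.Gamma_mul_rpow_le_Gamma_add {s a : ℝ} (hs : 1 < s) (ha : 0 < a) :
    Gamma s * (s - 1) ^ a ≤ Gamma (s + a) := by
  have hs₀ : 0 < s - 1 := by linarith
  have hslope := (convexOn_iff_slope_mono_adjacent.mp convexOn_log_Gamma).2
    (Set.mem_Ioi.mpr hs₀) (Set.mem_Ioi.mpr (by linarith : 0 < s + a))
    (by linarith : s - 1 < s) (by linarith : s < s + a)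
  have hrec : log (Gamma s) = log (Gamma (s - 1)) + log (s - 1) := by
    rw [← log_mul (Gamma_pos_of_pos hs₀).ne' hs₀.ne', mul_comm, ← Gamma_add_one hs₀.ne',
      sub_add_cancel]
  simp only [Function.comp_apply, sub_sub_cancel, div_one, add_sub_cancel_left] at hslope
  rw [le_div_iff₀ ha, hrec] at hslope
  rw [← exp_log (Gamma_pos_of_pos (by linarith : 0 < s)), ← exp_log (Gamma_pos_of_pos
    (by linarith : 0 < s + a)), rpow_def_of_pos hs₀, ← exp_add, exp_le_exp, hrec]
  linarith

theorem summable_pow_div_Gamma {a : ℝ} (ha : 0 < a) (b Y : ℝ) :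
    Summable fun k : ℕ => Y ^ k / Gamma (a * k + b) := by
  have hlim : Tendsto (fun k : ℕ => a * k + b - 1) atTop atTop :=
    tendsto_atTop_add_const_right _ _
      (tendsto_atTop_add_const_right _ _ (tendsto_natCast_atTop_atTop.const_mul_atTop ha))
  refine summable_of_ratio_norm_eventually_le (r := 1 / 2) (by norm_num) ?_
  filter_upwards [hlim.eventually_gt_atTop 0,
    ((tendsto_rpow_atTop ha).comp hlim).eventually_ge_atTop (2 * |Y|)] with k hk hkY
  set s := a * k + b
  have hΓ : 0 < Gamma s := Gamma_pos_of_pos (by linarith)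
  have hΓ' : 0 < Gamma (s + a) := Gamma_pos_of_pos (by linarith)
  have hgrowth : Gamma s * (2 * |Y|) ≤ Gamma (s + a) :=
    (mul_le_mul_of_nonneg_left hkY hΓ.le).trans (Gamma_mul_rpow_le_Gamma_add (by linarith) ha)
  have hs : a * ((k + 1 : ℕ) : ℝ) + b = s + a := by push_cast; ring
  rw [hs, norm_div, norm_div, norm_pow, norm_pow, Real.norm_of_nonneg hΓ.le,
    Real.norm_of_nonneg hΓ'.le, div_le_iff₀ hΓ', pow_succ]
  calc ‖Y‖ ^ k * ‖Y‖ = 1 / 2 * (‖Y‖ ^ k / Gamma s) * (Gamma s * (2 * |Y|)) := by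
        field_simp; rw [Real.norm_eq_abs]
    _ ≤ 1 / 2 * (‖Y‖ ^ k / Gamma s) * Gamma (s + a) := by gcongr

theorem summable_norm_prabhakar_term {α : ℝ} (hα : 0 < α) (β γ x : ℝ) :
    Summable fun k : ℕ => ‖poch γ k * x ^ k / (k.factorial * Gamma (α * k + β))‖ := by
  refine .of_nonneg_of_le (fun _ => norm_nonneg _) (fun k => ?_)
    (summable_abs_iff.mpr (summable_pow_div_Gamma hα β ((1 + |γ|) * |x|)))
  have hk : (0 : ℝ) < k.factorial := by positivity
  simp only [Real.norm_eq_abs, abs_div, abs_mul, abs_pow, abs_abs, Nat.abs_cast, mul_pow,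
    abs_of_pos (by positivity : 0 < 1 + |γ|)]
  calc |poch γ k| * |x| ^ k / (k.factorial * |Gamma (α * k + β)|)
      ≤ k.factorial * (1 + |γ|) ^ k * |x| ^ k / (k.factorial * |Gamma (α * k + β)|) := by
        gcongr; exact abs_poch_le γ k
    _ = (1 + |γ|) ^ k * |x| ^ k / |Gamma (α * k + β)| := by
        rw [mul_assoc, mul_div_mul_left _ _ hk.ne']

end GammaGrowth

section BetaIntegral

open MeasureTheory ProbabilityTheory Set

theorem integral_rpow_mul_one_sub_rpow {a b : ℝ} (ha : 0 < a) (hb : 0 < b) :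
    ∫ x in (0 : ℝ)..1, x ^ (a - 1) * (1 - x) ^ (b - 1) = beta a b := by
  have hcast : Complex.betaIntegral a b =
      ↑(∫ x in (0 : ℝ)..1, x ^ (a - 1) * (1 - x) ^ (b - 1)) := by
    rw [Complex.betaIntegral, ← intervalIntegral.integral_ofReal]
    refine intervalIntegral.integral_congr fun x hx => ?_
    rw [uIcc_of_le zero_le_one] at hx
    push_cast
    rw [Complex.ofReal_cpow hx.1, Complex.ofReal_cpow (sub_nonneg.mpr hx.2)]
    push_cast
    rfl
  rw [beta_eq_betaIntegralReal a b ha hb, hcast, Complex.ofReal_re]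

theorem ProbabilityTheory.beta_le_beta {a b a' b' : ℝ} (ha : 0 < a) (hb : 0 < b) (haa' : a ≤ a')
    (hbb' : b ≤ b') : beta a' b' ≤ beta a b := by
  have ha' : 0 < a' := ha.trans_le haa'
  have hb' : 0 < b' := hb.trans_le hbb'
  have hint {a b : ℝ} (ha : 0 < a) (hb : 0 < b) :
      IntervalIntegrable (fun x => x ^ (a - 1) * (1 - x) ^ (b - 1)) volume 0 1 :=
    intervalIntegral.intervalIntegrable_of_integral_ne_zero <| by
      rw [integral_rpow_mul_one_sub_rpow ha hb]; exact (beta_pos ha hb).ne'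
  rw [← integral_rpow_mul_one_sub_rpow ha hb, ← integral_rpow_mul_one_sub_rpow ha' hb']
  refine intervalIntegral.integral_mono_on_of_le_Ioo zero_le_one (hint ha' hb') (hint ha hb)
    fun x ⟨hx₀, hx₁⟩ => ?_
  have h1x : 0 < 1 - x := sub_pos.mpr hx₁
  gcongr ?_ * ?_
  · exact rpow_le_rpow_of_exponent_ge hx₀ hx₁.le (by linarith)
  · exact rpow_le_rpow_of_exponent_ge h1x (by linarith) (by linarith)

theorem integral_Ioo_sub_rpow_mul_sub_rpow {a b t₀ t : ℝ} (ha : 0 < a) (hb : 0 < b)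
    (ht : t₀ < t) :
    ∫ u in Ioo t₀ t, (t - u) ^ (a - 1) * (u - t₀) ^ (b - 1) =
      beta a b * (t - t₀) ^ (a + b - 1) := by
  have hT : 0 < t - t₀ := sub_pos.mpr ht
  have hsubst := intervalIntegral.smul_integral_comp_mul_add (a := 0) (b := 1)
    (fun u => (t - u) ^ (a - 1) * (u - t₀) ^ (b - 1)) (t - t₀) t₀
  simp only [mul_zero, zero_add, mul_one, sub_add_cancel, smul_eq_mul] at hsubst
  rw [← integral_Ioc_eq_integral_Ioo, ← intervalIntegral.integral_of_le ht.le, ← hsubst]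
  have hscale : ∀ x ∈ uIcc (0 : ℝ) 1,
      (t - ((t - t₀) * x + t₀)) ^ (a - 1) * ((t - t₀) * x + t₀ - t₀) ^ (b - 1) =
        (t - t₀) ^ (a - 1) * (t - t₀) ^ (b - 1) * (x ^ (b - 1) * (1 - x) ^ (a - 1)) := by
    intro x hx
    rw [uIcc_of_le zero_le_one] at hx
    rw [show t - ((t - t₀) * x + t₀) = (t - t₀) * (1 - x) by ring, add_sub_cancel_right,
      mul_rpow hT.le (sub_nonneg.mpr hx.2), mul_rpow hT.le hx.1]
    ring
  rw [intervalIntegral.integral_congr hscale, intervalIntegral.integral_const_mul,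
    integral_rpow_mul_one_sub_rpow hb ha, ← rpow_add hT,
    show a + b - 1 = a - 1 + (b - 1) + 1 by ring, rpow_add_one hT.ne']
  simp only [beta, mul_comm (Gamma b), add_comm b]
  ring

theorem integrableOn_Ioo_sub_rpow_mul_sub_rpow {a b t₀ t : ℝ} (ha : 0 < a) (hb : 0 < b)
    (ht : t₀ < t) :
    IntegrableOn (fun u => (t - u) ^ (a - 1) * (u - t₀) ^ (b - 1)) (Ioo t₀ t) :=
  Integrable.of_integral_ne_zero <| by
    rw [integral_Ioo_sub_rpow_mul_sub_rpow ha hb ht]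
    exact mul_ne_zero (beta_pos ha hb).ne' (rpow_pos_of_pos (sub_pos.mpr ht) _).ne'

theorem hasSum_integral_mul_rpow_series {a b c d : ℕ → ℝ} {f g : ℝ → ℝ} {a₀ b₀ t₀ t : ℝ}
    (ha₀ : 0 < a₀) (hb₀ : 0 < b₀) (ha : ∀ i, a₀ ≤ a i) (hb : ∀ j, b₀ ≤ b j) (ht : t₀ < t)
    (hf : ∀ w, 0 < w → f w = ∑' i, c i * w ^ (a i - 1))
    (hg : ∀ w, 0 < w → g w = ∑' j, d j * w ^ (b j - 1))
    (hc : ∀ w, 0 < w → Summable fun i => ‖c i * w ^ (a i - 1)‖)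
    (hd : ∀ w, 0 < w → Summable fun j => ‖d j * w ^ (b j - 1)‖) :
    HasSum
      (fun p : ℕ × ℕ => c p.1 * d p.2 * (beta (a p.1) (b p.2) * (t - t₀) ^ (a p.1 + b p.2 - 1)))
      (∫ u in t₀..t, f (t - u) * g (u - t₀)) := by
  have hT : 0 < t - t₀ := sub_pos.mpr ht
  set F : ℕ × ℕ → ℝ → ℝ :=
    fun p u => c p.1 * d p.2 * ((t - u) ^ (a p.1 - 1) * (u - t₀) ^ (b p.2 - 1))
  have hpos (p : ℕ × ℕ) : 0 < a p.1 ∧ 0 < b p.2 := ⟨ha₀.trans_le (ha _), hb₀.trans_le (hb _)⟩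
  have hF_int (p : ℕ × ℕ) : IntegrableOn (F p) (Ioo t₀ t) :=
    (integrableOn_Ioo_sub_rpow_mul_sub_rpow (hpos p).1 (hpos p).2 ht).const_mul _
  have hF_integral (p : ℕ × ℕ) : ∫ u in Ioo t₀ t, F p u =
      c p.1 * d p.2 * (beta (a p.1) (b p.2) * (t - t₀) ^ (a p.1 + b p.2 - 1)) := by
    rw [integral_const_mul, integral_Ioo_sub_rpow_mul_sub_rpow (hpos p).1 (hpos p).2 ht]
  have hF_norm (p : ℕ × ℕ) : ∫ u in Ioo t₀ t, ‖F p u‖ =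
      |c p.1 * d p.2| * (beta (a p.1) (b p.2) * (t - t₀) ^ (a p.1 + b p.2 - 1)) := by
    rw [← integral_Ioo_sub_rpow_mul_sub_rpow (hpos p).1 (hpos p).2 ht, ← integral_const_mul]
    refine setIntegral_congr_fun measurableSet_Ioo fun u ⟨hu₀, hu₁⟩ => ?_
    simp only [F, norm_mul, Real.norm_eq_abs, abs_mul,
      abs_of_nonneg (rpow_nonneg (sub_nonneg.mpr hu₁.le) _),
      abs_of_nonneg (rpow_nonneg (sub_nonneg.mpr hu₀.le) _)]
  have hF_sum : Summable fun p => ∫ u in Ioo t₀ t, ‖F p u‖ := by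
    simp only [hF_norm]
    refine .of_nonneg_of_le (fun p => by have := beta_pos (hpos p).1 (hpos p).2; positivity)
      (fun p => ?_) (((hc _ hT).mul_of_nonneg (hd _ hT) (fun _ => norm_nonneg _)
        (fun _ => norm_nonneg _)).mul_left (beta a₀ b₀ * (t - t₀)))
    rw [show a p.1 + b p.2 - 1 = a p.1 - 1 + (b p.2 - 1) + 1 by ring, rpow_add_one hT.ne',
      rpow_add hT]
    simp only [norm_mul, Real.norm_eq_abs, abs_mul, abs_of_pos (rpow_pos_of_pos hT _)]
    have hB := beta_le_beta ha₀ hb₀ (ha p.1) (hb p.2)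
    calc |c p.1| * |d p.2| * (beta (a p.1) (b p.2) *
          ((t - t₀) ^ (a p.1 - 1) * (t - t₀) ^ (b p.2 - 1) * (t - t₀)))
        ≤ |c p.1| * |d p.2| * (beta a₀ b₀ *
          ((t - t₀) ^ (a p.1 - 1) * (t - t₀) ^ (b p.2 - 1) * (t - t₀))) := by gcongr
      _ = _ := by ring
  have hexpand : EqOn (fun u => f (t - u) * g (u - t₀)) (fun u => ∑' p, F p u) (Ioo t₀ t) := by
    intro u ⟨hu₀, hu₁⟩
    dsimp only
    rw [hf _ (sub_pos.mpr hu₁), hg _ (sub_pos.mpr hu₀),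
      tsum_mul_tsum_of_summable_norm (hc _ (sub_pos.mpr hu₁)) (hd _ (sub_pos.mpr hu₀))]
    exact tsum_congr fun p => by simp only [F]; ring
  rw [intervalIntegral.integral_of_le ht.le, integral_Ioc_eq_integral_Ioo,
    setIntegral_congr_fun measurableSet_Ioo hexpand]
  simpa only [hF_integral] using hasSum_integral_of_summable_integral_norm hF_int hF_sum

end BetaIntegral

section PrabhakarKernel

open Finset ProbabilityTheory

noncomputable def prabhakarKernel (α β γ lam t : ℝ) : ℝ :=
  t ^ (β - 1) * prabhakarR α β γ (lam * t ^ α)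

/-- The coefficient of `w ^ (α * k + β - 1)` in `prabhakarKernel α β γ lam w`;
`Ring.multichoose γ k = (γ)ₖ / k!`. -/
noncomputable def prabhakarCoeff (α β γ lam : ℝ) (k : ℕ) : ℝ :=
  Ring.multichoose γ k * lam ^ k / Gamma (α * k + β)

theorem prabhakar_term_mul_rpow {α β γ lam w : ℝ} (hw : 0 < w) (k : ℕ) :
    poch γ k * (lam * w ^ α) ^ k / (k.factorial * Gamma (α * k + β)) * w ^ (β - 1) =
      prabhakarCoeff α β γ lam k * w ^ (α * k + β - 1) := by
  rw [prabhakarCoeff, poch_eq_factorial_mul_multichoose, mul_pow, ← rpow_natCast (w ^ α),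
    ← rpow_mul hw.le, add_sub_assoc, rpow_add hw]
  field_simp

theorem prabhakarKernel_eq_tsum {α β γ lam w : ℝ} (hw : 0 < w) :
    prabhakarKernel α β γ lam w = ∑' k : ℕ, prabhakarCoeff α β γ lam k * w ^ (α * k + β - 1) := by
  rw [prabhakarKernel, prabhakarR, mul_comm, ← tsum_mul_right]
  exact tsum_congr (prabhakar_term_mul_rpow hw)

theorem summable_norm_prabhakarCoeff_mul_rpow {α β γ lam w : ℝ} (hα : 0 < α) (hw : 0 < w) :
    Summable fun k : ℕ => ‖prabhakarCoeff α β γ lam k * w ^ (α * k + β - 1)‖ := by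
  simp only [← prabhakar_term_mul_rpow hw, norm_mul]
  exact (summable_norm_prabhakar_term hα β γ _).mul_right _

theorem prabhakarCoeff_mul_prabhakarCoeff_mul_beta {α β μ : ℝ} (hα : 0 ≤ α) (hβ : 0 < β)
    (hμ : 0 < μ) (γ σ lam : ℝ) (i j : ℕ) :
    prabhakarCoeff α β γ lam i * prabhakarCoeff α μ σ lam j * beta (α * i + β) (α * j + μ) =
      Ring.multichoose γ i * Ring.multichoose σ j * lam ^ (i + j) /
        Gamma (α * ↑(i + j) + (β + μ)) := by
  have hi : 0 < Gamma (α * i + β) := Gamma_pos_of_pos (by positivity)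
  have hj : 0 < Gamma (α * j + μ) := Gamma_pos_of_pos (by positivity)
  rw [prabhakarCoeff, prabhakarCoeff, beta,
    show α * ↑(i + j) + (β + μ) = α * i + β + (α * j + μ) by push_cast; ring]
  field_simp
  ring

theorem sum_antidiagonal_prabhakarCoeff_mul_beta {α β μ T : ℝ} (hα : 0 ≤ α) (hβ : 0 < β)
    (hμ : 0 < μ) (γ σ lam : ℝ) (n : ℕ) :
    ∑ p ∈ antidiagonal n, prabhakarCoeff α β γ lam p.1 * prabhakarCoeff α μ σ lam p.2 *
        (beta (α * p.1 + β) (α * p.2 + μ) * T ^ (α * p.1 + β + (α * p.2 + μ) - 1)) =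
      prabhakarCoeff α (β + μ) (γ + σ) lam n * T ^ (α * n + (β + μ) - 1) := by
  rw [prabhakarCoeff, Ring.multichoose_add, sum_mul, sum_div, sum_mul]
  refine sum_congr rfl fun p hp => ?_
  rw [HasAntidiagonal.mem_antidiagonal] at hp
  rw [← mul_assoc, prabhakarCoeff_mul_prabhakarCoeff_mul_beta hα hβ hμ, hp]
  congr 2
  rw [← hp]
  push_cast
  ring

end PrabhakarKernel

/-- The convolution of two Prabhakar kernels is a Prabhakar kernel with added parameters:
`∫_{t₀}^t (t-u)^{β-1} E_{α,β}^γ(λ(t-u)^α) (u-t₀)^{μ-1} E_{α,μ}^σ(λ(u-t₀)^α) du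
  = (t-t₀)^{β+μ-1} E_{α,β+μ}^{γ+σ}(λ(t-t₀)^α)`. -/
theorem prabhakar_kernel_convolution (α β μ lam γ σ t₀ t : ℝ)
    (hα : 0 < α) (hβ : 0 < β) (hμ : 0 < μ) (ht : t₀ < t) :
    ∫ u in t₀..t,
        (t - u) ^ (β - 1) * prabhakarR α β γ (lam * (t - u) ^ α) *
          ((u - t₀) ^ (μ - 1) * prabhakarR α μ σ (lam * (u - t₀) ^ α)) =
      (t - t₀) ^ (β + μ - 1) * prabhakarR α (β + μ) (γ + σ) (lam * (t - t₀) ^ α) := by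
  have hexp (δ : ℝ) (k : ℕ) : δ ≤ α * k + δ := le_add_of_nonneg_left (by positivity)
  have hsum := hasSum_integral_mul_rpow_series (f := prabhakarKernel α β γ lam)
    (g := prabhakarKernel α μ σ lam) hβ hμ (hexp β) (hexp μ) ht
    (fun _ hw => prabhakarKernel_eq_tsum hw) (fun _ hw => prabhakarKernel_eq_tsum hw)
    (fun _ hw => summable_norm_prabhakarCoeff_mul_rpow hα hw)
    (fun _ hw => summable_norm_prabhakarCoeff_mul_rpow hα hw)
  calc _ = _ := hsum.tsum_eq.symm
    _ = _ := tsum_prod_eq_tsum_sum_antidiagonal hsum.summable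
    _ = ∑' n : ℕ, prabhakarCoeff α (β + μ) (γ + σ) lam n * (t - t₀) ^ (α * n + (β + μ) - 1) :=
        tsum_congr (sum_antidiagonal_prabhakarCoeff_mul_beta hα.le hβ hμ γ σ lam)
    _ = _ := (prabhakarKernel_eq_tsum (sub_pos.mpr ht)).symm
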